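/- Let M ∈ ℕ and let α, β be real numbers such that α+j ≠ 0 and β+j ≠ 0 for all j = 1,…,M, and α+β+j ≠ 0 for all j = 1,…,2M+1. Then for all integers x, y ∈ {0,…,M}: Σ_{k=0}^{M} [ (2k+α+β+1)·(α+1)_k·(−M)_k·M! ] / [ (−1)^k·(k+α+β+1)_{M+1}·(β+1)_k·k! ] · Q_k(x; α, β, M)·Q_k(y; α, β, M) = δ_{x,y} · x!(M−x)! / ( (α+1)_x (β+1)_{M−x} ) (the dual orthogonality relation for Hahn polynomials). -/

import Mathlib

/-- The Pochhammer symbol `(a)_i = a(a+1)⋯(a+i−1)`, with `(a)_0 = 1`. -/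
noncomputable def poch (a : ℝ) (i : ℕ) : ℝ := ∏ j ∈ Finset.range i, (a + j)

/-- The Hahn polynomial
`Q_k(x; α, β, M) = Σ_{i=0}^{k} (−k)_i (−x)_i (k+α+β+1)_i / ((−M)_i (α+1)_i i!)`. -/
noncomputable def hahnQ (k : ℕ) (x α β M : ℝ) : ℝ :=
  ∑ i ∈ Finset.range (k + 1),
    poch (-(k : ℝ)) i * poch (-x) i * poch ((k : ℝ) + α + β + 1) i /
      (poch (-M) i * poch (α + 1) i * (Nat.factorial i : ℝ))

/-!
The dual relation says that the matrix `(w(x) Q_k(x) / h_k)_{x,k}` is a right inverse of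
`(Q_k(x))_{k,x}`. Both are square, so it suffices that it is a left inverse, which is the ordinary
orthogonality `∑_x w(x) Q_k(x) Q_l(x) = δ_{kl} h_k` for the weight
`w(x) = (α+1)_x (β+1)_{M-x} / (x! (M-x)!)`.

Orthogonality goes by induction on `k`. The forward difference of `Q_{k+1}(·; α, β, M+1)` is a
multiple of `Q_k(·; α+1, β+1, M)`, and conversely `w · Q_{l+1}(·; α, β, M+1)` is a multiple of the
backward difference of `w' · Q_l(·; α+1, β+1, M)` (a Rodrigues-type formula), where `w'` is the
weight for the shifted parameters. Summation by parts therefore lowers the pair `(k+1, l+1)` to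
`(k, l)` with shifted parameters. At `k = 0` the sum of the weights is computed by the
Chu–Vandermonde identity for Pochhammer symbols.
-/

open Finset

@[simp] lemma poch_zero (a : ℝ) : poch a 0 = 1 := prod_range_zero _

lemma poch_succ (a : ℝ) (n : ℕ) : poch a (n + 1) = poch a n * (a + n) :=
  prod_range_succ _ _

lemma poch_succ' (a : ℝ) (n : ℕ) : poch a (n + 1) = a * poch (a + 1) n := by
  rw [poch, prod_range_succ', poch]
  simp only [Nat.cast_add, Nat.cast_one, Nat.cast_zero, add_zero]
  rw [mul_comm]
  congr 1
  exact prod_congr rfl fun _ _ => by ring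

lemma poch_ne_zero {a : ℝ} {n : ℕ} (h : ∀ j < n, a + j ≠ 0) : poch a n ≠ 0 :=
  prod_ne_zero_iff.mpr fun j hj => h j (mem_range.mp hj)

lemma poch_neg_nat_of_lt {n m : ℕ} (h : n < m) : poch (-(n : ℝ)) m = 0 :=
  prod_eq_zero (mem_range.mpr h) (by ring)

lemma poch_neg_nat_ne_zero {n m : ℕ} (h : m ≤ n) : poch (-(n : ℝ)) m ≠ 0 :=
  poch_ne_zero fun j hj => by
    rw [neg_add_eq_sub, sub_ne_zero, Ne, Nat.cast_inj]
    omega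

lemma poch_add (a b : ℝ) (n : ℕ) :
    poch (a + b) n = ∑ i ∈ range (n + 1), (n.choose i : ℝ) * (poch a i * poch b (n - i)) := by
  induction n with
  | zero => simp
  | succ n ih =>
    rw [sum_choose_succ_mul (fun i j => poch a i * poch b j), ← sum_add_distrib,
      poch_succ, ih, sum_mul]
    refine sum_congr rfl fun i hi => ?_
    have hi : i ≤ n := Nat.lt_succ_iff.mp (mem_range.mp hi)
    rw [Nat.sub_add_comm hi, poch_succ b, poch_succ a, Nat.cast_sub hi]
    ring

lemma mul_poch_neg_sub_one (x : ℝ) (i : ℕ) :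
    x * poch (-(x - 1)) i = (x - i) * poch (-x) i := by
  have h := (poch_succ' (-x) i).symm.trans (poch_succ (-x) i)
  rw [show -(x - 1) = -x + 1 by ring]
  linear_combination -h

noncomputable def hahnCoeff (k : ℕ) (α β M : ℝ) (i : ℕ) : ℝ :=
  poch (-(k : ℝ)) i * poch ((k : ℝ) + α + β + 1) i /
    (poch (-M) i * poch (α + 1) i * (Nat.factorial i : ℝ))

lemma hahnQ_eq_sum (k : ℕ) (x α β M : ℝ) :
    hahnQ k x α β M = ∑ i ∈ range (k + 1), hahnCoeff k α β M i * poch (-x) i :=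
  sum_congr rfl fun _ _ => by rw [hahnCoeff]; ring

lemma hahnCoeff_of_lt {k i : ℕ} (h : k < i) (α β M : ℝ) : hahnCoeff k α β M i = 0 := by
  rw [hahnCoeff, poch_neg_nat_of_lt h, zero_mul, zero_div]

lemma hahnQ_eq_sum_of_le {k n : ℕ} (h : k ≤ n) (x α β M : ℝ) :
    hahnQ k x α β M = ∑ i ∈ range (n + 1), hahnCoeff k α β M i * poch (-x) i := by
  rw [hahnQ_eq_sum]
  refine sum_subset (range_subset_range.mpr (by omega)) fun i _ hi => ?_
  rw [hahnCoeff_of_lt (by simp at hi; omega), zero_mul]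

@[simp] lemma hahnQ_zero (x α β M : ℝ) : hahnQ 0 x α β M = 1 := by
  simp [hahnQ_eq_sum, hahnCoeff]

lemma hahnCoeff_succ (k i : ℕ) (α β M : ℝ) :
    hahnCoeff k α β M (i + 1) =
      (i - k) * (k + α + β + 1 + i) / ((i - M) * (α + 1 + i) * (i + 1)) *
        hahnCoeff k α β M i := by
  rw [hahnCoeff, hahnCoeff, poch_succ, poch_succ, poch_succ, poch_succ, Nat.factorial_succ,
    div_mul_div_comm]
  push_cast
  congr 1 <;> ring

lemma hahnCoeff_succ_succ (k i : ℕ) (α β M : ℝ) :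
    hahnCoeff (k + 1) α β (M + 1) (i + 1) =
      (k + 1) * (k + α + β + 2) / ((M + 1) * (α + 1) * (i + 1)) *
        hahnCoeff k (α + 1) (β + 1) M i := by
  rw [hahnCoeff, hahnCoeff, poch_succ', poch_succ', poch_succ', poch_succ', Nat.factorial_succ,
    div_mul_div_comm, ← neg_div_neg_eq]
  push_cast
  congr 1 <;> ring_nf

lemma poch_neg_add_one_sub (x : ℝ) (i : ℕ) :
    poch (-(x + 1)) (i + 1) - poch (-x) (i + 1) = -(i + 1) * poch (-x) i := by
  rw [poch_succ', poch_succ, show -(x + 1) + 1 = -x by ring]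
  ring

lemma hahnQ_add_one_sub (k : ℕ) (x α β M : ℝ) :
    hahnQ (k + 1) (x + 1) α β (M + 1) - hahnQ (k + 1) x α β (M + 1) =
      -((k + 1) * (k + α + β + 2) / ((M + 1) * (α + 1))) * hahnQ k x (α + 1) (β + 1) M := by
  rw [hahnQ_eq_sum, hahnQ_eq_sum, hahnQ_eq_sum, ← sum_sub_distrib, sum_range_succ', mul_sum]
  simp only [poch_zero, sub_self, add_zero]
  refine sum_congr rfl fun i _ => ?_
  rw [← mul_sub, poch_neg_add_one_sub, hahnCoeff_succ_succ]
  have hi : (i : ℝ) + 1 ≠ 0 := by positivity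
  field_simp

lemma hahnCoeff_backward_shift {k j N : ℕ} (hj : j ≤ k) (hk : k ≤ N) {α : ℝ}
    (hα : ∀ j ≤ k, α + 1 + j ≠ 0) (β : ℝ) :
    (N + 1) * (α + 1) * hahnCoeff (k + 1) α β (N + 1) (j + 1) =
      (N - j) * (α + 2 + j) * hahnCoeff k (α + 1) (β + 1) N (j + 1) +
        (α + β + 2 + j) * hahnCoeff k (α + 1) (β + 1) N j := by
  have hα₀ : α + 1 ≠ 0 := by simpa using hα 0 (Nat.zero_le k)
  have hj₁ : (j : ℝ) + 1 ≠ 0 := by positivity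
  have hN : (N : ℝ) + 1 ≠ 0 := by positivity
  rw [hahnCoeff_succ_succ]
  rcases hj.lt_or_eq with hj | rfl
  · have hjN : (j : ℝ) - N ≠ 0 := sub_ne_zero.mpr (by norm_cast; omega)
    have hαj : α + 1 + 1 + j ≠ 0 := by
      convert hα (j + 1) hj using 1
      push_cast
      ring
    rw [hahnCoeff_succ]
    field_simp
    ring
  · rw [hahnCoeff_of_lt (Nat.lt_succ_self j)]
    field_simp
    ring

lemma hahnQ_backward_shift {k N : ℕ} (hk : k ≤ N) {α : ℝ} (hα : ∀ j ≤ k, α + 1 + j ≠ 0)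
    (β x : ℝ) :
    (α + 1 + x) * (N + 1 - x) * hahnQ k x (α + 1) (β + 1) N -
        x * (β + N + 2 - x) * hahnQ k (x - 1) (α + 1) (β + 1) N =
      (N + 1) * (α + 1) * hahnQ (k + 1) x α β (N + 1) := by
  set c := hahnCoeff k (α + 1) (β + 1) N
  have hterm : ∀ i, (α + 1 + x) * (N + 1 - x) * (c i * poch (-x) i) -
      x * (β + N + 2 - x) * (c i * poch (-(x - 1)) i) =
        c i * ((N + 1 - i) * (α + 1 + i) * poch (-x) i) +
          c i * ((α + β + 2 + i) * poch (-x) (i + 1)) := fun i => by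
    linear_combination (-(β + N + 2 - x) * c i) * mul_poch_neg_sub_one x i -
      ((α + β + 2 + i) * c i) * poch_succ (-x) i
  have hcoeff : ∀ j ∈ range (k + 1),
      c (j + 1) * ((N + 1 - (j + 1 : ℕ)) * (α + 1 + (j + 1 : ℕ)) * poch (-x) (j + 1)) +
          c j * ((α + β + 2 + j) * poch (-x) (j + 1)) =
        (N + 1) * (α + 1) * (hahnCoeff (k + 1) α β (N + 1) (j + 1) * poch (-x) (j + 1)) :=
    fun j hj => by
      have := hahnCoeff_backward_shift (Nat.lt_succ_iff.mp (mem_range.mp hj)) hk hα β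
      push_cast
      linear_combination (-poch (-x) (j + 1)) * this
  rw [hahnQ_eq_sum_of_le k.le_succ, hahnQ_eq_sum_of_le k.le_succ, hahnQ_eq_sum,
    mul_sum, mul_sum, mul_sum, ← sum_sub_distrib, sum_congr rfl fun i _ => hterm i,
    sum_add_distrib, sum_range_succ' _ (k + 1), sum_range_succ _ (k + 1),
    sum_range_succ' _ (k + 1), ← sum_congr rfl hcoeff, sum_add_distrib,
    show c (k + 1) = 0 from hahnCoeff_of_lt k.lt_succ_self _ _ _]
  simp only [c, hahnCoeff, poch_zero]
  ring

noncomputable def hahnWeight (α β : ℝ) (M x : ℕ) : ℝ :=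
  poch (α + 1) x * poch (β + 1) (M - x) / ((x.factorial : ℝ) * ((M - x).factorial : ℝ))

lemma sum_hahnWeight (α β : ℝ) (M : ℕ) :
    ∑ x ∈ range (M + 1), hahnWeight α β M x = poch (α + β + 2) M / (M.factorial : ℝ) := by
  rw [show α + β + 2 = (α + 1) + (β + 1) by ring, poch_add, sum_div]
  refine sum_congr rfl fun x hx => ?_
  rw [hahnWeight, Nat.cast_choose ℝ (Nat.lt_succ_iff.mp (mem_range.mp hx))]
  have : (M.factorial : ℝ) ≠ 0 := by positivity
  field_simp

lemma hahnWeight_mul_of_le {M x : ℕ} (hx : x ≤ M) (α β : ℝ) :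
    hahnWeight α β (M + 1) x * ((α + 1 + x) * (M + 1 - x)) =
      (α + 1) * (β + 1) * hahnWeight (α + 1) (β + 1) M x := by
  obtain ⟨t, rfl⟩ := Nat.exists_eq_add_of_le hx
  rw [hahnWeight, hahnWeight, show x + t + 1 - x = t + 1 by omega, Nat.add_sub_cancel_left,
    poch_succ' (β + 1), Nat.factorial_succ]
  have hα : poch (α + 1) x * (α + 1 + x) = (α + 1) * poch (α + 1 + 1) x :=
    (poch_succ _ _).symm.trans (poch_succ' _ _)
  have : (t : ℝ) + 1 ≠ 0 := by positivity
  push_cast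
  field_simp
  linear_combination ((β + 1) * poch (β + 1 + 1) t * (t + 1)) * hα

lemma hahnWeight_succ_mul_of_le {M x : ℕ} (hx : x ≤ M) (α β : ℝ) :
    hahnWeight α β (M + 1) (x + 1) * ((x + 1) * (β + M + 1 - x)) =
      (α + 1) * (β + 1) * hahnWeight (α + 1) (β + 1) M x := by
  obtain ⟨t, rfl⟩ := Nat.exists_eq_add_of_le hx
  rw [hahnWeight, hahnWeight, show x + t + 1 - (x + 1) = t by omega, Nat.add_sub_cancel_left,
    poch_succ' (α + 1), Nat.factorial_succ]
  have hβ : poch (β + 1) t * (β + 1 + t) = (β + 1) * poch (β + 1 + 1) t :=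
    (poch_succ _ _).symm.trans (poch_succ' _ _)
  have : (x : ℝ) + 1 ≠ 0 := by positivity
  push_cast
  field_simp
  linear_combination ((α + 1) * poch (α + 1 + 1) x) * hβ

noncomputable def hahnInner (α β : ℝ) (M k l : ℕ) : ℝ :=
  ∑ x ∈ range (M + 1), hahnWeight α β M x * hahnQ k x α β M * hahnQ l x α β M

lemma hahnInner_comm (α β : ℝ) (M k l : ℕ) : hahnInner α β M k l = hahnInner α β M l k :=
  sum_congr rfl fun _ _ => by ring

lemma hahnInner_succ_right {M l : ℕ} (hl : l ≤ M) {α : ℝ} (hα : ∀ j ≤ l, α + 1 + j ≠ 0)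
    (β : ℝ) (k : ℕ) :
    (M + 1) * (α + 1) * hahnInner α β (M + 1) k (l + 1) =
      -((α + 1) * (β + 1)) * ∑ x ∈ range (M + 1),
        hahnWeight (α + 1) (β + 1) M x * hahnQ l x (α + 1) (β + 1) M *
          (hahnQ k (x + 1) α β (M + 1) - hahnQ k x α β (M + 1)) := by
  set w := hahnWeight α β (M + 1)
  set Q : ℝ → ℝ := fun x => hahnQ k x α β (M + 1)
  set Q' : ℝ → ℝ := fun x => hahnQ l x (α + 1) (β + 1) M
  have hterm : ∀ x ∈ range (M + 2),
      (M + 1) * (α + 1) * (w x * Q x * hahnQ (l + 1) x α β (M + 1)) =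
        w x * ((α + 1 + x) * (M + 1 - x)) * Q x * Q' x -
          w x * (x * (β + M + 2 - x)) * Q x * Q' (x - 1) := fun x _ => by
    linear_combination (-(w x * Q x)) * hahnQ_backward_shift hl hα β x
  -- Summation by parts: the boundary terms carry the factor `M + 1 - x` at `x = M + 1`,
  -- resp. `x` at `x = 0`.
  have hS₁ : ∑ x ∈ range (M + 2), w x * ((α + 1 + x) * (M + 1 - x)) * Q x * Q' x =
      ∑ x ∈ range (M + 1),
        (α + 1) * (β + 1) * hahnWeight (α + 1) (β + 1) M x * Q x * Q' x := by
    rw [sum_range_succ]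
    push_cast
    rw [sub_self, mul_zero, mul_zero, zero_mul, zero_mul, add_zero]
    refine sum_congr rfl fun x hx => ?_
    rw [hahnWeight_mul_of_le (Nat.lt_succ_iff.mp (mem_range.mp hx))]
  have hS₂ : ∑ x ∈ range (M + 2), w x * (x * (β + M + 2 - x)) * Q x * Q' (x - 1) =
      ∑ x ∈ range (M + 1),
        (α + 1) * (β + 1) * hahnWeight (α + 1) (β + 1) M x * Q (x + 1) * Q' x := by
    rw [sum_range_succ']
    push_cast
    rw [zero_mul, mul_zero, zero_mul, zero_mul, add_zero]
    refine sum_congr rfl fun x hx => ?_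
    rw [← hahnWeight_succ_mul_of_le (Nat.lt_succ_iff.mp (mem_range.mp hx)), add_sub_cancel_right]
    ring
  rw [hahnInner]
  push_cast
  rw [mul_sum, sum_congr rfl hterm, sum_sub_distrib, hS₁, hS₂, mul_sum, ← sum_sub_distrib]
  refine sum_congr rfl fun x _ => ?_
  simp only [Q, Q']
  ring

lemma hahnInner_succ_succ {M l : ℕ} (hl : l ≤ M) {α : ℝ} (hα : ∀ j ≤ l, α + 1 + j ≠ 0)
    (β : ℝ) (k : ℕ) :
    hahnInner α β (M + 1) (k + 1) (l + 1) =
      (β + 1) * (k + 1) * (k + α + β + 2) / ((M + 1) ^ 2 * (α + 1)) *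
        hahnInner (α + 1) (β + 1) M k l := by
  have hα₀ : α + 1 ≠ 0 := by simpa using hα 0 l.zero_le
  have hM : (M : ℝ) + 1 ≠ 0 := by positivity
  refine mul_left_cancel₀ (mul_ne_zero hM hα₀) ?_
  rw [hahnInner_succ_right hl hα, hahnInner, mul_sum, mul_sum, mul_sum]
  refine sum_congr rfl fun x _ => ?_
  rw [hahnQ_add_one_sub]
  field_simp

lemma hahnInner_zero_succ {M l : ℕ} (hl : l ≤ M) {α : ℝ} (hα : ∀ j ≤ l, α + 1 + j ≠ 0)
    (β : ℝ) : hahnInner α β (M + 1) 0 (l + 1) = 0 := by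
  have hα₀ : α + 1 ≠ 0 := by simpa using hα 0 l.zero_le
  have hM : (M : ℝ) + 1 ≠ 0 := by positivity
  have h := hahnInner_succ_right hl hα β 0
  simp only [hahnQ_zero, sub_self, mul_zero, sum_const_zero] at h
  exact (mul_eq_zero.mp h).resolve_left (mul_ne_zero hM hα₀)

noncomputable def hahnNormSq (α β : ℝ) (M k : ℕ) : ℝ :=
  ((-1 : ℝ) ^ k * poch (k + α + β + 1) (M + 1) * poch (β + 1) k * (k.factorial : ℝ)) /
    ((2 * k + α + β + 1) * poch (α + 1) k * poch (-(M : ℝ)) k * (M.factorial : ℝ))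

lemma hahnNormSq_zero {α β : ℝ} (h : α + β + 1 ≠ 0) (M : ℕ) :
    hahnNormSq α β M 0 = poch (α + β + 2) M / (M.factorial : ℝ) := by
  have : (M.factorial : ℝ) ≠ 0 := by positivity
  simp only [hahnNormSq, pow_zero, poch_zero, Nat.cast_zero, Nat.factorial_zero, Nat.cast_one,
    mul_zero, zero_add, mul_one, one_mul]
  rw [poch_succ', show α + β + 1 + 1 = α + β + 2 by ring]
  field_simp

lemma hahnNormSq_succ (α β : ℝ) (M k : ℕ) :
    hahnNormSq α β (M + 1) (k + 1) =
      (β + 1) * (k + 1) * (k + α + β + 2) / ((M + 1) ^ 2 * (α + 1)) *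
        hahnNormSq (α + 1) (β + 1) M k := by
  rw [hahnNormSq, hahnNormSq, Nat.factorial_succ, Nat.factorial_succ]
  push_cast
  rw [poch_succ' (k + 1 + α + β + 1) (M + 1), poch_succ' (β + 1) k, poch_succ' (α + 1) k,
    poch_succ' (-(M + 1)) k, div_mul_div_comm, ← neg_div_neg_eq]
  congr 1 <;> ring_nf

theorem hahnInner_eq_ite {M k l : ℕ} (hk : k ≤ M) (hl : l ≤ M) {α β : ℝ}
    (hα : ∀ j < M, α + 1 + j ≠ 0) (hαβ : ∀ j ≤ k, α + β + 1 + 2 * j ≠ 0) :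
    hahnInner α β M k l = if k = l then hahnNormSq α β M k else 0 := by
  induction k generalizing M l α β with
  | zero =>
    cases l with
    | zero =>
      rw [if_pos rfl, hahnNormSq_zero (by simpa using hαβ 0 le_rfl), ← sum_hahnWeight]
      exact sum_congr rfl fun x _ => by simp
    | succ l =>
      obtain ⟨M, rfl⟩ : ∃ M', M = M' + 1 := ⟨M - 1, by omega⟩
      exact hahnInner_zero_succ (by omega) (fun j hj => hα j (by omega)) β
  | succ k ih =>
    obtain ⟨M, rfl⟩ : ∃ M', M = M' + 1 := ⟨M - 1, by omega⟩
    cases l with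
    | zero =>
      rw [hahnInner_comm, hahnInner_zero_succ (by omega) (fun j hj => hα j (by omega)) β,
        if_neg k.succ_ne_zero]
    | succ l =>
      rw [hahnInner_succ_succ (by omega) (fun j hj => hα j (by omega)), hahnNormSq_succ,
        ih (by omega) (by omega)]
      · by_cases hkl : k = l <;> simp [hkl]
      · intro j hj
        convert hα (j + 1) (by omega) using 1
        push_cast
        ring
      · intro j hj
        convert hαβ (j + 1) (by omega) using 1
        push_cast
        ring

lemma hahnWeight_ne_zero {M x : ℕ} (hx : x ≤ M) {α β : ℝ} (hα : ∀ j < M, α + 1 + j ≠ 0)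
    (hβ : ∀ j < M, β + 1 + j ≠ 0) : hahnWeight α β M x ≠ 0 := by
  have h₁ : poch (α + 1) x ≠ 0 := poch_ne_zero fun j hj => hα j (by omega)
  have h₂ : poch (β + 1) (M - x) ≠ 0 := poch_ne_zero fun j hj => hβ j (by omega)
  rw [hahnWeight]
  positivity

lemma hahnNormSq_ne_zero {M k : ℕ} (hk : k ≤ M) {α β : ℝ} (hα : ∀ j < M, α + 1 + j ≠ 0)
    (hβ : ∀ j < M, β + 1 + j ≠ 0) (hαβ : ∀ j ≤ 2 * M, α + β + 1 + j ≠ 0) :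
    hahnNormSq α β M k ≠ 0 := by
  have h₁ : poch (k + α + β + 1) (M + 1) ≠ 0 := poch_ne_zero fun j hj => by
    convert hαβ (k + j) (by omega) using 1
    push_cast
    ring
  have h₂ : poch (β + 1) k ≠ 0 := poch_ne_zero fun j hj => hβ j (by omega)
  have h₃ : (2 * k + α + β + 1 : ℝ) ≠ 0 := by
    convert hαβ (2 * k) (by omega) using 1
    push_cast
    ring
  have h₄ : poch (α + 1) k ≠ 0 := poch_ne_zero fun j hj => hα j (by omega)
  have h₅ := poch_neg_nat_ne_zero hk
  rw [hahnNormSq]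
  positivity

theorem dual_orthogonality_of_orthogonality {K : Type*} [Field K] {n : ℕ} {w h : ℕ → K}
    {p : ℕ → ℕ → K}
    (horth : ∀ k < n, ∀ l < n, ∑ x ∈ range n, w x * p k x * p l x = if k = l then h k else 0)
    (hh : ∀ k < n, h k ≠ 0) {x y : ℕ} (hx : x < n) (hy : y < n) :
    ∑ k ∈ range n, w x * p k x * p k y / h k = if x = y then 1 else 0 := by
  let A : Matrix (Fin n) (Fin n) K := Matrix.of fun k x => p k x
  let B : Matrix (Fin n) (Fin n) K := Matrix.of fun x k => w x * p k x / h k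
  have hAB : A * B = 1 := by
    ext k l
    simp only [Matrix.mul_apply, Matrix.one_apply, A, B, Matrix.of_apply]
    rw [Fin.sum_univ_eq_sum_range (fun j => p k j * (w j * p l j / h l)),
      show ∑ j ∈ range n, p k j * (w j * p l j / h l) = (∑ j ∈ range n, w j * p k j * p l j) / h l
        by rw [sum_div]; exact sum_congr rfl fun _ _ => by ring,
      horth k k.2 l l.2]
    by_cases hkl : k = l
    · simp [hkl, hh l l.2]
    · simp [hkl, Fin.val_inj]
  have hBA : (B * A) ⟨x, hx⟩ ⟨y, hy⟩ = (1 : Matrix (Fin n) (Fin n) K) ⟨x, hx⟩ ⟨y, hy⟩ := by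
    rw [mul_eq_one_comm.mp hAB]
  simp only [Matrix.mul_apply, Matrix.one_apply, A, B, Matrix.of_apply, Fin.mk.injEq] at hBA
  rw [← hBA, ← Fin.sum_univ_eq_sum_range (fun k => w x * p k x * p k y / h k)]
  exact sum_congr rfl fun k _ => by ring

/-- Dual orthogonality relation for the Hahn polynomials. -/
theorem stmt_8 (M : ℕ) (α β : ℝ)
    (hα : ∀ j : ℕ, 1 ≤ j → j ≤ M → α + j ≠ 0)
    (hβ : ∀ j : ℕ, 1 ≤ j → j ≤ M → β + j ≠ 0)
    (hαβ : ∀ j : ℕ, 1 ≤ j → j ≤ 2 * M + 1 → α + β + j ≠ 0) :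
    ∀ x y : ℕ, x ≤ M → y ≤ M →
      ∑ k ∈ Finset.range (M + 1),
        ((2 * (k : ℝ) + α + β + 1) * poch (α + 1) k * poch (-(M : ℝ)) k
            * (Nat.factorial M : ℝ)) /
          ((-1 : ℝ) ^ k * poch ((k : ℝ) + α + β + 1) (M + 1) * poch (β + 1) k
            * (Nat.factorial k : ℝ))
          * hahnQ k (x : ℝ) α β (M : ℝ) * hahnQ k (y : ℝ) α β (M : ℝ)
      = (if x = y then 1 else 0) *
          ((Nat.factorial x : ℝ) * (Nat.factorial (M - x) : ℝ)) /
          (poch (α + 1) x * poch (β + 1) (M - x)) := by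
  intro x y hx hy
  have hα' : ∀ j < M, α + 1 + j ≠ 0 := fun j hj => by
    convert hα (j + 1) (by omega) hj using 1; push_cast; ring
  have hβ' : ∀ j < M, β + 1 + j ≠ 0 := fun j hj => by
    convert hβ (j + 1) (by omega) hj using 1; push_cast; ring
  have hαβ' : ∀ j ≤ 2 * M, α + β + 1 + j ≠ 0 := fun j hj => by
    convert hαβ (j + 1) (by omega) (by omega) using 1; push_cast; ring
  have hdual := dual_orthogonality_of_orthogonality (n := M + 1)
    (fun k hk l hl => hahnInner_eq_ite (by omega) (by omega) hα' fun j hj => by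
      convert hαβ' (2 * j) (by omega) using 1; push_cast; ring)
    (fun k hk => hahnNormSq_ne_zero (by omega) hα' hβ' hαβ') (by omega : x < M + 1)
    (by omega : y < M + 1)
  have hw := hahnWeight_ne_zero hx hα' hβ'
  calc _ = (hahnWeight α β M x)⁻¹ * ∑ k ∈ range (M + 1),
          hahnWeight α β M x * hahnQ k x α β M * hahnQ k y α β M / hahnNormSq α β M k := by
        rw [mul_sum]
        refine sum_congr rfl fun k _ => ?_
        rw [hahnNormSq, ← inv_div]
        field_simp
    _ = _ := by rw [hdual, hahnWeight, inv_div, mul_comm, ← mul_div_assoc]
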